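/- arXiv:1605.09403 — 7 statements merged into one kernel-verified Lean document; each statement's English description precedes it below -/
import Mathlib

section
/- Let G be a group, let a ∈ G be an element of finite order with a ≠ 1, let p be a prime, and let q, b be positive integers with p ∤ q. Then the sequence u(n) = a^{v_p(q·n + b)} (n ≥ 0) is not ultimately periodic. -/
/-- The subword complexity of a sequence: the number of distinct factors of length `n`. -/
noncomputable def subwordComplexity {α : Type*} (u : ℕ → α) (n : ℕ) : ℕ :=
  (Set.range fun start => fun i : Fin n => u (start + (i : ℕ))).ncard

/-- A sequence is ultimately periodic. -/
def UltimatelyPeriodic {α : Type*} (u : ℕ → α) : Prop :=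
  ∃ N T : ℕ, 0 < T ∧ ∀ n ≥ N, u (n + T) = u n

/-- A sequence is `k`-automatic iff its `k`-kernel is finite. -/
def IsAutomatic {α : Type*} (k : ℕ) (u : ℕ → α) : Prop :=
  {v : ℕ → α | ∃ e r : ℕ, r < k ^ e ∧ v = fun n => u (k ^ e * n + r)}.Finite

def BigO (f g : ℕ → ℕ) : Prop := ∃ C N : ℕ, ∀ n ≥ N, f n ≤ C * g n

def BigOmega (f g : ℕ → ℕ) : Prop := ∃ c N : ℕ, 0 < c ∧ ∀ n ≥ N, g n ≤ c * f n

def BigTheta (f g : ℕ → ℕ) : Prop := BigO f g ∧ BigOmega f g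



lemma padic_eq_of {p : ℕ} [Fact p.Prime] {n k : ℕ} (hn : n ≠ 0)
    (h1 : p ^ k ∣ n) (h2 : ¬ p ^ (k + 1) ∣ n) : padicValNat p n = k := by
  have a1 := (padicValNat_dvd_iff_le hn).mp h1
  have a2 : ¬ (k + 1 ≤ padicValNat p n) := fun h => h2 ((padicValNat_dvd_iff_le hn).mpr h)
  omega


theorem stmt4 {G : Type*} [Group G] (a : G) (hfin : IsOfFinOrder a) (ha : a ≠ 1)
    (p : ℕ) (hp : p.Prime) (q b : ℕ) (hq : 0 < q) (hb : 0 < b) (hpq : ¬ p ∣ q) :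
    ¬ UltimatelyPeriodic (fun n => a ^ padicValNat p (q * n + b)) := by
  haveI : Fact p.Prime := ⟨hp⟩
  rintro ⟨N, T, hT, hper⟩
  set s := padicValNat p (q * T) with hs
  set k := s + 1 with hk
  set m := p ^ (k + 1) with hm
  haveI : NeZero m := ⟨pow_ne_zero _ hp.pos.ne'⟩
  have hqT : q * T ≠ 0 := by positivity
  -- q is a unit mod m
  have hcop : Nat.Coprime q m := ((Nat.Prime.coprime_iff_not_dvd hp).mpr hpq).symm.pow_right _
  have hunit : IsUnit (q : ZMod m) := (ZMod.isUnit_iff_coprime q m).mpr hcop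
  set x : ZMod m := (q : ZMod m)⁻¹ * ((p ^ k : ℕ) - (b : ℕ) : ZMod m) with hx
  set n : ℕ := x.val + m * N with hn
  have hnN : n ≥ N := by
    have : m * N ≥ N := Nat.le_mul_of_pos_left N (NeZero.pos m)
    omega
  -- mod m computation
  have hcast : ((q * n + b : ℕ) : ZMod m) = ((p ^ k : ℕ) : ZMod m) := by
    simp only [hn, Nat.cast_add, Nat.cast_mul, ZMod.natCast_self, zero_mul, add_zero,
      ZMod.natCast_val, ZMod.cast_id]
    rw [hx, ← mul_assoc, ZMod.mul_inv_of_unit _ hunit, one_mul, sub_add_cancel]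
  have hmodeq : q * n + b ≡ p ^ k [MOD m] := (ZMod.natCast_eq_natCast_iff _ _ _).mp hcast
  have hnb0 : q * n + b ≠ 0 := by omega
  -- p^k ∣ q*n+b
  have hdk : p ^ k ∣ q * n + b := by
    have h1 : q * n + b ≡ p ^ k [MOD p ^ k] := hmodeq.of_dvd (pow_dvd_pow p (by omega))
    have h2 : (p : ℕ) ^ k ≡ 0 [MOD p ^ k] := (Nat.modEq_zero_iff_dvd).mpr dvd_rfl
    exact (Nat.modEq_zero_iff_dvd).mp (h1.trans h2)
  -- ¬ p^(k+1) ∣ q*n+b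
  have hndk : ¬ p ^ (k + 1) ∣ q * n + b := by
    intro hdvd
    have h1 : q * n + b ≡ 0 [MOD m] := (Nat.modEq_zero_iff_dvd).mpr hdvd
    have h2 : (p:ℕ) ^ k ≡ 0 [MOD m] := hmodeq.symm.trans h1
    have h3 : p ^ (k+1) ∣ p ^ k := (Nat.modEq_zero_iff_dvd).mp h2
    have := (Nat.pow_dvd_pow_iff_le_right hp.one_lt).mp h3
    omega
  have hvn : padicValNat p (q * n + b) = k := padic_eq_of hnb0 hdk hndk
  -- value at n + T
  have hsplit : q * (n + T) + b = (q * n + b) + q * T := by ring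
  have hds : p ^ s ∣ q * T := pow_padicValNat_dvd
  have hnds : ¬ p ^ (s + 1) ∣ q * T := pow_succ_padicValNat_not_dvd hqT
  have hd1 : p ^ s ∣ q * n + b := dvd_trans (pow_dvd_pow p (by omega)) hdk
  have hd1' : p ^ (s + 1) ∣ q * n + b := by rw [← hk]; exact hdk
  have hvnT : padicValNat p (q * (n + T) + b) = s := by
    rw [hsplit]
    refine padic_eq_of (by omega) (Dvd.dvd.add hd1 hds) ?_
    intro hdvd
    exact hnds ((Nat.dvd_add_right hd1').mp hdvd)
  have := hper n hnN
  simp only [hvn, hvnT] at this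
  rw [hk, pow_succ] at this
  exact ha (mul_left_cancel (a := a ^ s) (by rw [mul_one]; exact this)).symm
end

section
/- For each prime p, the sequence u(n) = (−1)^{v_p(n)} (for n ≥ 1) is p-automatic but not ultimately periodic; consequently its subword complexity satisfies p_u(n) = Θ(n). -/
lemma neg_one_pow_succ_ne (a : ℕ) : ((-1:ℤ))^(a+1) ≠ (-1)^a := by
  rcases Nat.even_or_odd a with h | h
  · rw [h.neg_one_pow, (Even.add_one h).neg_one_pow]; decide
  · rw [h.neg_one_pow, (Odd.add_one h).neg_one_pow]; decide

lemma padic_add (p : ℕ) (hp : p.Prime) {a b : ℕ} (hb : b ≠ 0)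
    (h : p ^ (padicValNat p b + 1) ∣ a) : padicValNat p (a + b) = padicValNat p b := by
  haveI : Fact p.Prime := ⟨hp⟩
  have hab : a + b ≠ 0 := by omega
  have h1 : p ^ padicValNat p b ∣ a + b :=
    dvd_add (dvd_trans (pow_dvd_pow p (Nat.le_succ _)) h) pow_padicValNat_dvd
  have h2 : ¬ p ^ (padicValNat p b + 1) ∣ a + b := by
    intro hd
    exact pow_succ_padicValNat_not_dvd hb ((Nat.dvd_add_right h).mp hd)
  have h3 := (padicValNat_dvd_iff_le hab).mp h1
  have h4 : ¬ (padicValNat p b + 1 ≤ padicValNat p (a + b)) :=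
    fun hle => h2 ((padicValNat_dvd_iff_le hab).mpr hle)
  omega

lemma padic_lt (p : ℕ) (hp : p.Prime) {s e : ℕ} (hs : s ≠ 0) (hse : s < p ^ e) :
    padicValNat p s < e := by
  haveI : Fact p.Prime := ⟨hp⟩
  have h2 : p ^ padicValNat p s ≤ s := Nat.le_of_dvd (Nat.pos_of_ne_zero hs) pow_padicValNat_dvd
  exact (Nat.pow_lt_pow_iff_right hp.one_lt).mp (lt_of_le_of_lt h2 hse)

lemma exists_special (p : ℕ) (hp : p.Prime) (v A : ℕ) :
    ∃ z, A < z ∧ z ≤ A + 2 * p ^ (v+1) ∧ p^(v+1) ∣ z ∧ padicValNat p z = v + 1 := by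
  haveI : Fact p.Prime := ⟨hp⟩
  set M := p ^ (v+1) with hM
  have hMpos : 0 < M := pow_pos hp.pos _
  have hdm := Nat.div_add_mod A M
  have hmod := Nat.mod_lt A hMpos
  have hnd : ¬ p ^ (v+2) ∣ M := by
    intro hd
    have := Nat.le_of_dvd hMpos hd
    have h5 : p ^ (v+1) < p ^ (v+2) := Nat.pow_lt_pow_right hp.one_lt (by omega)
    omega
  have key : ∀ z : ℕ, z ≠ 0 → p^(v+1) ∣ z → ¬ p^(v+2) ∣ z → padicValNat p z = v + 1 := by
    intro z hz h1 h2
    have h3 := (padicValNat_dvd_iff_le hz).mp h1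
    have h4 : ¬ (v + 2 ≤ padicValNat p z) := fun hle => h2 ((padicValNat_dvd_iff_le hz).mpr hle)
    omega
  by_cases hc : p ^ (v+2) ∣ M * (A / M + 1)
  · refine ⟨M * (A / M + 1) + M, ?_, ?_, ?_, ?_⟩
    · rw [mul_add, mul_one]; omega
    · rw [mul_add, mul_one]; omega
    · exact dvd_add (Dvd.intro _ rfl) dvd_rfl
    · refine key _ (by positivity) (dvd_add (Dvd.intro _ rfl) dvd_rfl) ?_
      intro hd
      exact hnd ((Nat.dvd_add_right hc).mp hd)
  · refine ⟨M * (A / M + 1), ?_, ?_, Dvd.intro _ rfl, key _ (by positivity) (Dvd.intro _ rfl) hc⟩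
    · rw [mul_add, mul_one]; omega
    · rw [mul_add, mul_one]; omega

lemma mismatch (p : ℕ) (hp : p.Prime) (T A : ℕ) (hT : T ≠ 0) :
    ∃ x, A ≤ x ∧ x < A + 2 * p ^ (padicValNat p T + 1) ∧
      ((-1:ℤ)) ^ padicValNat p (x + T + 1) ≠ (-1) ^ padicValNat p (x + 1) := by
  obtain ⟨z, hz1, hz2, hzd, hzv⟩ := exists_special p hp (padicValNat p T) A
  refine ⟨z - 1, by omega, by omega, ?_⟩
  have hx1 : z - 1 + 1 = z := by omega
  have hx2 : z - 1 + T + 1 = z + T := by omega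
  rw [hx2, hx1, padic_add p hp hT hzd, hzv]
  exact (neg_one_pow_succ_ne _).symm

lemma count_bound (p : ℕ) (hp : p.Prime) (n e : ℕ) (hne : n ≤ p ^ e) :
    subwordComplexity (fun n => ((-1 : ℤ)) ^ padicValNat p (n + 1)) n ≤ 2 * p ^ e := by
  haveI : Fact p.Prime := ⟨hp⟩
  have hMpos : 0 < p ^ e := pow_pos hp.pos _
  let H : Fin (p ^ e) × Bool → (Fin n → ℤ) := fun x i =>
    if ((x.1 : ℕ) + (i : ℕ) + 1) % p ^ e = 0 then (if x.2 then 1 else -1) * (-1)^e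
    else (-1)^(padicValNat p (((x.1 : ℕ) + (i : ℕ) + 1) % p ^ e))
  show (Set.range fun start => fun i : Fin n =>
      ((-1:ℤ)) ^ padicValNat p (start + (i:ℕ) + 1)).ncard ≤ 2 * p ^ e
  have hsub : (Set.range fun start => fun i : Fin n =>
      ((-1:ℤ)) ^ padicValNat p (start + (i:ℕ) + 1)) ⊆ Set.range H := by
    rintro _ ⟨start, rfl⟩
    refine ⟨(⟨start % p ^ e, Nat.mod_lt _ hMpos⟩,
      decide (Even (padicValNat p (start / p ^ e + 1)))), ?_⟩
    funext i
    show (if (start % p ^ e + (i:ℕ) + 1) % p ^ e = 0 then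
        (if decide (Even (padicValNat p (start / p ^ e + 1))) then (1:ℤ) else -1) * (-1)^e
      else (-1)^(padicValNat p ((start % p ^ e + (i:ℕ) + 1) % p ^ e)))
      = (-1)^(padicValNat p (start + (i:ℕ) + 1))
    have hdm := Nat.div_add_mod start (p ^ e)
    have hs : (start + (i:ℕ) + 1) % p ^ e = (start % p ^ e + (i:ℕ) + 1) % p ^ e := by
      conv_lhs => rw [show start + (i:ℕ) + 1
        = p ^ e * (start / p ^ e) + (start % p ^ e + (i:ℕ) + 1) by omega]
      exact Nat.mul_add_mod _ _ _
    by_cases h0 : (start % p ^ e + (i:ℕ) + 1) % p ^ e = 0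
    · rw [if_pos h0]
      have hdvd : p ^ e ∣ start + (i:ℕ) + 1 := Nat.dvd_of_mod_eq_zero (by omega)
      obtain ⟨t, hmt⟩ := hdvd
      have h1 : start / p ^ e < t := (Nat.div_lt_iff_lt_mul hMpos).mpr
        (by have hc : t * p ^ e = p ^ e * t := mul_comm _ _; omega)
      have h2 : t ≤ start / p ^ e + 1 := by
        have h2a : t ≤ (start + p ^ e) / p ^ e := (Nat.le_div_iff_mul_le hMpos).mpr
          (by have hc : t * p ^ e = p ^ e * t := mul_comm _ _; have hi := i.isLt; omega)
        rwa [Nat.add_div_right _ hMpos] at h2a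
      have ht' : t = start / p ^ e + 1 := by omega
      have htne : t ≠ 0 := by rintro rfl; omega
      rw [hmt, padicValNat.mul (pow_pos hp.pos e).ne' htne, padicValNat.prime_pow, ht']
      rcases Nat.even_or_odd (padicValNat p (start / p ^ e + 1)) with hV | hV
      · rw [decide_eq_true hV, if_pos rfl, pow_add, hV.neg_one_pow, mul_one, one_mul]
      · rw [decide_eq_false (Nat.not_even_iff_odd.mpr hV), pow_add, hV.neg_one_pow]
        simp
    · rw [if_neg h0]
      have hslt : (start % p ^ e + (i:ℕ) + 1) % p ^ e < p ^ e := Nat.mod_lt _ hMpos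
      have hlt : padicValNat p ((start % p ^ e + (i:ℕ) + 1) % p ^ e) < e :=
        padic_lt p hp h0 hslt
      have hdvd2 : p ^ (padicValNat p ((start % p ^ e + (i:ℕ) + 1) % p ^ e) + 1)
          ∣ p ^ e * ((start + (i:ℕ) + 1) / p ^ e) :=
        dvd_mul_of_dvd_left (pow_dvd_pow p hlt) _
      have hrw : start + (i:ℕ) + 1
          = p ^ e * ((start + (i:ℕ) + 1) / p ^ e) + (start % p ^ e + (i:ℕ) + 1) % p ^ e := by
        have := Nat.div_add_mod (start + (i:ℕ) + 1) (p ^ e)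
        omega
      rw [hrw, padic_add p hp h0 hdvd2]
  refine le_trans (Set.ncard_le_ncard hsub (Set.finite_range H)) ?_
  have hr : Set.range H = ↑(Finset.image H Finset.univ) := by
    rw [Finset.coe_image, Finset.coe_univ, Set.image_univ]
  rw [hr, Set.ncard_coe_finset]
  refine le_trans Finset.card_image_le ?_
  have hcard : (Finset.univ : Finset (Fin (p ^ e) × Bool)).card = p ^ e * 2 := by simp
  omega

lemma count_lower (p : ℕ) (hp : p.Prime) (n m : ℕ) (hm : 0 < m) (hmn : 8 * p * m ≤ n) :
    m ≤ subwordComplexity (fun n => ((-1 : ℤ)) ^ padicValNat p (n + 1)) n := by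
  haveI : Fact p.Prime := ⟨hp⟩
  show m ≤ (Set.range fun start => fun i : Fin n =>
      ((-1:ℤ)) ^ padicValNat p (start + (i:ℕ) + 1)).ncard
  let g : Fin m → (Fin n → ℤ) :=
    fun j => fun i : Fin n => ((-1:ℤ)) ^ padicValNat p ((j:ℕ) + (i:ℕ) + 1)
  have key : ∀ a b : Fin m, (a:ℕ) < (b:ℕ) → g a = g b → False := by
    intro a b hab he
    set T := (b:ℕ) - (a:ℕ) with hT
    have hT0 : T ≠ 0 := by omega
    obtain ⟨x, hx1, hx2, hne⟩ := mismatch p hp T (a:ℕ) hT0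
    have hpv : p ^ padicValNat p T ≤ T := Nat.le_of_dvd (by omega) pow_padicValNat_dvd
    have e1 : p ^ (padicValNat p T + 1) = p ^ padicValNat p T * p := pow_succ p _
    have e2 : p ^ padicValNat p T * p ≤ T * p := Nat.mul_le_mul_right p hpv
    have e3 : T * p ≤ m * p := Nat.mul_le_mul_right p (by omega)
    have e4 : m * p * 8 = 8 * p * m := by ring
    have hb := b.isLt
    have hin : x - (a:ℕ) < n := by omega
    have h5 : ((-1:ℤ))^(padicValNat p ((a:ℕ) + (x - (a:ℕ)) + 1))
        = (-1)^(padicValNat p ((b:ℕ) + (x - (a:ℕ)) + 1)) := congrFun he ⟨x - (a:ℕ), hin⟩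
    have ea : (a:ℕ) + (x - (a:ℕ)) + 1 = x + 1 := by omega
    have eb : (b:ℕ) + (x - (a:ℕ)) + 1 = x + T + 1 := by omega
    rw [ea, eb] at h5
    exact hne h5.symm
  have hginj : Function.Injective g := by
    intro a b hab
    by_contra hne2
    rcases Nat.lt_trichotomy (a:ℕ) (b:ℕ) with h | h | h
    · exact (key a b h hab).elim
    · exact hne2 (Fin.ext h)
    · exact (key b a h hab.symm).elim
  have hfin : (Set.range fun start => fun i : Fin n =>
      ((-1:ℤ)) ^ padicValNat p (start + (i:ℕ) + 1)).Finite := by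
    apply Set.Finite.subset (Set.Finite.pi
      (fun _ : Fin n => (Set.finite_singleton (-1:ℤ)).insert 1))
    rintro _ ⟨start, rfl⟩
    intro i _
    rcases Nat.even_or_odd (padicValNat p (start + (i:ℕ) + 1)) with h | h
    · simp [h.neg_one_pow]
    · simp [h.neg_one_pow]
  have hsub : Set.range g ⊆ (Set.range fun start => fun i : Fin n =>
      ((-1:ℤ)) ^ padicValNat p (start + (i:ℕ) + 1)) := by
    rintro _ ⟨j, rfl⟩
    exact ⟨(j:ℕ), rfl⟩
  calc m = (Set.range g).ncard := by
        rw [← Set.image_univ, Set.ncard_image_of_injective _ hginj, Set.ncard_univ,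
          Nat.card_eq_fintype_card, Fintype.card_fin]
    _ ≤ _ := Set.ncard_le_ncard hsub hfin

theorem stmt5 (p : ℕ) (hp : p.Prime) :
    IsAutomatic p (fun n => ((-1 : ℤ)) ^ padicValNat p (n + 1)) ∧
    ¬ UltimatelyPeriodic (fun n => ((-1 : ℤ)) ^ padicValNat p (n + 1)) ∧
    BigTheta (subwordComplexity (fun n => ((-1 : ℤ)) ^ padicValNat p (n + 1)))
      (fun n => n) := by
  haveI : Fact p.Prime := ⟨hp⟩
  refine ⟨?_, ?_, ?_, ?_⟩
  · -- automatic
    apply Set.Finite.subset (s := ({(fun _ => (1:ℤ)), (fun _ => (-1:ℤ)),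
        (fun n => ((-1:ℤ)) ^ padicValNat p (n + 1)),
        (fun n => -((-1:ℤ)) ^ padicValNat p (n + 1))} : Set (ℕ → ℤ)))
    · exact (((Set.finite_singleton _).insert _).insert _).insert _
    · rintro v ⟨e, r, hr, rfl⟩
      simp only [Set.mem_insert_iff, Set.mem_singleton_iff]
      by_cases hre : r + 1 = p ^ e
      · have hval : ∀ n : ℕ, padicValNat p (p ^ e * n + r + 1) = e + padicValNat p (n+1) := by
          intro n
          have hmul : p ^ e * n + r + 1 = p ^ e * (n + 1) := by rw [mul_add, mul_one]; omega
          rw [hmul, padicValNat.mul (pow_pos hp.pos e).ne' (by omega), padicValNat.prime_pow]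
        rcases Nat.even_or_odd e with he | he
        · right; right; left
          funext n
          show ((-1:ℤ)) ^ padicValNat p (p ^ e * n + r + 1) = _
          rw [hval n, pow_add, he.neg_one_pow, one_mul]
        · right; right; right
          funext n
          show ((-1:ℤ)) ^ padicValNat p (p ^ e * n + r + 1) = _
          rw [hval n, pow_add, he.neg_one_pow, neg_one_mul]
      · have hlt : padicValNat p (r+1) < e := padic_lt p hp (by omega) (by omega)
        have hval : ∀ n : ℕ, padicValNat p (p ^ e * n + r + 1) = padicValNat p (r+1) := by
          intro n
          have hrw : p ^ e * n + r + 1 = p ^ e * n + (r + 1) := by omega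
          rw [hrw, padic_add p hp (by omega) (dvd_mul_of_dvd_left (pow_dvd_pow p hlt) n)]
        rcases Nat.even_or_odd (padicValNat p (r+1)) with he | he
        · left
          funext n
          show ((-1:ℤ)) ^ padicValNat p (p ^ e * n + r + 1) = _
          rw [hval n, he.neg_one_pow]
        · right; left
          funext n
          show ((-1:ℤ)) ^ padicValNat p (p ^ e * n + r + 1) = _
          rw [hval n, he.neg_one_pow]
  · -- not ultimately periodic
    rintro ⟨N, T, hT, hper⟩
    obtain ⟨x, hx1, _, hne⟩ := mismatch p hp T N (by omega)
    exact hne (hper x hx1)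
  · -- BigO
    refine ⟨2*p, 1, ?_⟩
    intro n hn
    have key := count_bound p hp n (Nat.clog p n) (Nat.le_pow_clog hp.one_lt n)
    have hMn : p ^ Nat.clog p n ≤ p * n := by
      rcases eq_or_lt_of_le hn with h1 | h1
      · rw [← h1, Nat.clog_one_right, pow_zero]
        have := hp.pos
        omega
      · have h3 := Nat.pow_pred_clog_lt_self hp.one_lt h1
        have h4 : 0 < Nat.clog p n := Nat.clog_pos hp.one_lt h1
        calc p ^ Nat.clog p n = p * p ^ (Nat.clog p n - 1) := by
              rw [← pow_succ']
              congr 1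
              omega
          _ ≤ p * n := Nat.mul_le_mul_left p h3.le
    calc subwordComplexity (fun n => ((-1:ℤ)) ^ padicValNat p (n + 1)) n
        ≤ 2 * p ^ Nat.clog p n := key
      _ ≤ 2 * (p * n) := Nat.mul_le_mul_left 2 hMn
      _ = 2 * p * n := by ring
  · -- BigOmega
    have hppos := hp.pos
    refine ⟨16*p, 8*p, by omega, ?_⟩
    intro n hn
    have hp8 : 0 < 8*p := by omega
    have hm1 : 1 ≤ n / (8*p) := (Nat.one_le_div_iff hp8).mpr hn
    have hdm := Nat.div_add_mod n (8*p)
    have hmod := Nat.mod_lt n hp8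
    have hclaim := count_lower p hp n (n / (8*p)) hm1 (by omega)
    have h2 : 8*p*1 ≤ 8*p*(n / (8*p)) := Nat.mul_le_mul_left _ hm1
    have hb1 : 16*p*(n / (8*p)) = 8*p*(n / (8*p)) + 8*p*(n / (8*p)) := by ring
    have hb2 : ∀ S : ℕ, 16*p*S = 8*p*S + 8*p*S := fun S => by ring
    have h4 := hb2 (subwordComplexity (fun n => ((-1:ℤ)) ^ padicValNat p (n + 1)) n)
    have h3 : 16*p*(n / (8*p))
        ≤ 16*p*(subwordComplexity (fun n => ((-1:ℤ)) ^ padicValNat p (n + 1)) n) :=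
      Nat.mul_le_mul_left _ hclaim
    show n ≤ 16*p*(subwordComplexity (fun n => ((-1:ℤ)) ^ padicValNat p (n + 1)) n)
    omega
end

section
/- The sequence u(n) = (−1)^{v_2(n)+v_3(n)} (for n ≥ 1) has subword complexity p_u(n) = Ω(n²); in particular p_u(n) ≥ ⌈(n+1)²/6⌉ for lengths of the form max{3n−2, r+2n−1}. -/
/-!
If the factors of length `m` of `u` at positions `s < t` coincide, then `d = t - s` preserves the
parity of `v₂(n) + v₃(n)` for `n ∈ (s, s + m]`. Let `{p, q} = {2, 3}` and `p ^ k ∥ d`. At a point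
`n` of the window with `v_p(n) = k + 1` or `v_p(n + d) = k + 1`, the valuation `v_p` changes by one
between `n` and `n + d`, so `v_q` must change parity too, which forces `q ^ j ∣ n` whenever
`q ^ j ∣ d`. This is contradicted either by a point placed (Chinese remainder theorem) off the
multiples of `q`, or by two such points, both multiples of `p ^ k * q ^ j`, in a window shorter than
`p ^ k * q ^ j`. Inductively `2 ^ a * 3 ^ b ∣ d` while `2 ^ (a + 1) ≤ m` and `2 * 3 ^ b ≤ m`, so the
first `2 ^ a * 3 ^ b ≥ (m + 1)² / 24` factors of length `m` are pairwise distinct. The lengths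
`3n - 2 < 48` are checked by computation.
-/

namespace padicValNat

variable {p : ℕ} [hp : Fact p.Prime]

lemma eq_of_dvd_of_not_dvd {n k : ℕ} (hn : n ≠ 0) (hk : p ^ k ∣ n) (hk' : ¬p ^ (k + 1) ∣ n) :
    padicValNat p n = k := by
  rw [padicValNat_dvd_iff_le hn] at hk hk'
  omega

lemma eq_of_modEq_pow {n k : ℕ} (h : n ≡ p ^ k [MOD p ^ (k + 1)]) : padicValNat p n = k := by
  have hpk : 0 < p ^ k := pow_pos hp.out.pos k
  have hdvd : p ^ k ∣ n := (h.dvd_iff (pow_dvd_pow p k.le_succ)).mpr dvd_rfl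
  have hndvd : ¬p ^ (k + 1) ∣ n := by
    rw [h.dvd_iff dvd_rfl]
    exact Nat.not_dvd_of_pos_of_lt hpk (Nat.pow_lt_pow_succ hp.out.one_lt)
  exact eq_of_dvd_of_not_dvd (by rintro rfl; exact hndvd (dvd_zero _)) hdvd hndvd

lemma add_eq_min {x y : ℕ} (hx : x ≠ 0) (hy : y ≠ 0)
    (h : padicValNat p x ≠ padicValNat p y) :
    padicValNat p (x + y) = min (padicValNat p x) (padicValNat p y) := by
  have key := padicValRat.add_eq_min (p := p) (q := x) (r := y) (by positivity)
    (by exact_mod_cast hx) (by exact_mod_cast hy) (by simpa [padicValRat.of_nat] using h)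
  rw [← Nat.cast_add, padicValRat.of_nat, padicValRat.of_nat, padicValRat.of_nat] at key
  omega

end padicValNat

lemma Nat.exists_modEq_window {M : ℕ} (hM : 0 < M) (s r : ℕ) :
    ∃ x, s < x ∧ x ≤ s + M ∧ x ≡ r [MOD M] := by
  -- the multiple of `M` shifting `r % M` into `(s, s + M]`
  set t := (s + M - r % M) / M * M
  have h1 : t ≤ s + M - r % M := Nat.div_mul_le_self _ _
  have h2 : s + M - r % M < t + M := Nat.lt_div_mul_add hM
  have hr : r % M < M := Nat.mod_lt r hM
  refine ⟨r % M + t, by omega, by omega, ?_⟩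
  simp [Nat.ModEq, t, Nat.add_mul_mod_self_right]

lemma Nat.exists_modEq_modEq_window {M N : ℕ} (hco : M.Coprime N) (hM : 0 < M) (hN : 0 < N)
    (s a b : ℕ) : ∃ x, s < x ∧ x ≤ s + M * N ∧ x ≡ a [MOD M] ∧ x ≡ b [MOD N] := by
  obtain ⟨z, hzM, hzN⟩ := Nat.chineseRemainder hco a b
  obtain ⟨x, hx1, hx2, hx⟩ := Nat.exists_modEq_window (Nat.mul_pos hM hN) s z
  exact ⟨x, hx1, hx2, (hx.of_mul_right N).trans hzM, (hx.of_mul_left M).trans hzN⟩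

lemma Nat.eq_of_dvd_of_window {M s x y : ℕ} (hx : M ∣ x) (hy : M ∣ y)
    (hx1 : s < x) (hx2 : x ≤ s + M) (hy1 : s < y) (hy2 : y ≤ s + M) : x = y :=
  ((Nat.modEq_zero_iff_dvd.2 hx).trans (Nat.modEq_zero_iff_dvd.2 hy).symm).eq_of_abs_lt
    (by rw [abs_sub_lt_iff]; omega)

lemma exists_padicValNat_eq_window (p : ℕ) [hp : Fact p.Prime] (s k : ℕ) :
    ∃ x, s < x ∧ x ≤ s + 2 * p ^ k ∧ padicValNat p x = k := by
  -- of two consecutive multiples of `p ^ k`, one has cofactor prime to `p`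
  set t := s / p ^ k + 1
  have hP : 0 < p ^ k := pow_pos hp.out.pos k
  have ht1 : s < p ^ k * t := by
    simpa [t, mul_add, mul_comm] using Nat.lt_div_mul_add (a := s) hP
  have ht2 : p ^ k * t ≤ s + p ^ k := by
    simpa [t, mul_add, mul_comm] using Nat.div_mul_le_self s (p ^ k)
  have hval : ∀ c, ¬p ∣ c → padicValNat p (p ^ k * c) = k := fun c hc => by
    rw [padicValNat.mul hP.ne' (by rintro rfl; exact hc (dvd_zero p)), padicValNat.prime_pow,
      padicValNat.eq_zero_of_not_dvd hc, add_zero]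
  by_cases hpt : p ∣ t
  · have hpt1 : ¬p ∣ t + 1 := fun h => hp.out.not_dvd_one ((Nat.dvd_add_right hpt).1 h)
    exact ⟨p ^ k * (t + 1), by rw [mul_add]; omega, by rw [mul_add]; omega, hval _ hpt1⟩
  · exact ⟨p ^ k * t, ht1, by omega, hval _ hpt⟩

def ParityPeriodOn (p q s m d : ℕ) : Prop :=
  ∀ n, s < n → n ≤ s + m →
    (padicValNat p n + padicValNat q n) % 2 = (padicValNat p (n + d) + padicValNat q (n + d)) % 2

namespace ParityPeriodOn

section

variable {p q s m d : ℕ}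

lemma symm (H : ParityPeriodOn p q s m d) : ParityPeriodOn q p s m d := fun n h1 h2 => by
  rw [add_comm (padicValNat q n), add_comm (padicValNat q (n + d))]
  exact H n h1 h2

variable [hq : Fact q.Prime]

lemma pow_dvd_of_parity_ne (H : ParityPeriodOn p q s m d) {x j : ℕ} (hx1 : s < x) (hx2 : x ≤ s + m)
    (hpx : padicValNat p x % 2 ≠ padicValNat p (x + d) % 2) (hd : q ^ j ∣ d) : q ^ j ∣ x := by
  -- otherwise `v_q` does not change from `x` to `x + d`, while `v_p` changes parity
  by_contra hqx
  have hd0 : d ≠ 0 := by rintro rfl; exact hpx rfl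
  rw [padicValNat_dvd_iff_le (by omega)] at hqx
  rw [padicValNat_dvd_iff_le hd0] at hd
  have hsum := padicValNat.add_eq_min (p := q) (x := x) (by omega) hd0 (by omega)
  have := H x hx1 hx2
  rw [hsum, min_eq_left (by omega)] at this
  omega

variable [hp : Fact p.Prime]

lemma pow_succ_dvd_of_dvd (hpq : p ≠ q) (H : ParityPeriodOn p q s m d) {k : ℕ}
    (hqd : q ∣ d) (hk : p ^ k ∣ d) (hm : p ^ (k + 2) * q ≤ m) : p ^ (k + 1) ∣ d := by
  by_contra h
  have hd0 : d ≠ 0 := by rintro rfl; exact h (dvd_zero _)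
  have hvd : padicValNat p d = k := padicValNat.eq_of_dvd_of_not_dvd hd0 hk h
  have hco : (p ^ (k + 2)).Coprime q :=
    ((Nat.coprime_primes hp.out hq.out).2 hpq).pow_left _
  obtain ⟨x, hx1, hx2, hxp, hxq⟩ :=
    Nat.exists_modEq_modEq_window hco (pow_pos hp.out.pos _) hq.out.pos s (p ^ (k + 1)) 1
  have hvx : padicValNat p x = k + 1 := padicValNat.eq_of_modEq_pow hxp
  have hvxd : padicValNat p (x + d) = k := by
    rw [padicValNat.add_eq_min (by omega) hd0 (by omega), hvx, hvd]; omega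
  have hqx : q ^ 1 ∣ x := H.pow_dvd_of_parity_ne hx1 (by omega) (by omega) (by simpa using hqd)
  exact hq.out.not_dvd_one ((hxq.dvd_iff dvd_rfl).1 (by simpa using hqx))

lemma pow_succ_dvd_of_pow_dvd (hpq : p ≠ q) (H : ParityPeriodOn p q s m d) {j k : ℕ}
    (hj : 2 * p ≤ q ^ j) (hqd : q ^ j ∣ d) (hk : p ^ k ∣ d) (hm : 2 * p ^ (k + 1) ≤ m) :
    p ^ (k + 1) ∣ d := by
  by_contra h
  have hd0 : d ≠ 0 := by rintro rfl; exact h (dvd_zero _)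
  have hvd : padicValNat p d = k := padicValNat.eq_of_dvd_of_not_dvd hd0 hk h
  obtain ⟨x, hx1, hx2, hvx⟩ := exists_padicValNat_eq_window p s (k + 1)
  have hvxd : padicValNat p (x + d) = k := by
    rw [padicValNat.add_eq_min (by omega) hd0 (by omega), hvx, hvd]; omega
  obtain ⟨z, hz1, hz2, hvz⟩ := exists_padicValNat_eq_window p (s + d) (k + 1)
  obtain ⟨y, rfl⟩ : ∃ y, z = y + d := ⟨z - d, by omega⟩
  have hvy : padicValNat p y = k := by
    by_contra hne
    have := padicValNat.add_eq_min (p := p) (x := y) (by omega) hd0 (by omega)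
    omega
  have hdvd : ∀ n, padicValNat p n % 2 ≠ padicValNat p (n + d) % 2 → s < n →
      n ≤ s + 2 * p ^ (k + 1) → k ≤ padicValNat p n → p ^ k * q ^ j ∣ n := fun n hpar h1 h2 hk =>
    (((Nat.coprime_primes hp.out hq.out).2 hpq).pow k j).mul_dvd_of_dvd_of_dvd
      ((padicValNat_dvd_iff_le (by omega)).2 hk) (H.pow_dvd_of_parity_ne h1 (by omega) hpar hqd)
  have hwin : 2 * p ^ (k + 1) ≤ p ^ k * q ^ j := by
    calc 2 * p ^ (k + 1) = p ^ k * (2 * p) := by ring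
      _ ≤ p ^ k * q ^ j := Nat.mul_le_mul_left _ hj
  have hxy := Nat.eq_of_dvd_of_window (s := s) (hdvd x (by omega) hx1 hx2 (by omega))
    (hdvd y (by omega) (by omega) (by omega) (by omega)) hx1 (by omega) (by omega) (by omega)
  rw [hxy, hvy] at hvx
  omega

end

variable {s m d : ℕ}

lemma two_dvd (H : ParityPeriodOn 2 3 s m d) (hm : 12 ≤ m) : 2 ∣ d := by
  by_contra h
  obtain ⟨c, hc, hcd⟩ : ∃ c, c % 3 ≠ 0 ∧ (c + d) % 3 ≠ 0 :=
    if h3 : (1 + d) % 3 = 0 then ⟨2, by omega, by omega⟩ else ⟨1, by omega, h3⟩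
  obtain ⟨x, hx1, hx2, hx2', hx3⟩ :=
    Nat.exists_modEq_modEq_window (M := 2 ^ 2) (N := 3) (by norm_num) (by norm_num)
      (by norm_num) s (2 ^ 1) c
  have hvx : padicValNat 2 x = 1 := padicValNat.eq_of_modEq_pow hx2'
  unfold Nat.ModEq at hx2' hx3
  have := H x hx1 (by omega)
  rw [hvx, padicValNat.eq_zero_of_not_dvd (p := 2) (n := x + d) (by omega),
    padicValNat.eq_zero_of_not_dvd (p := 3) (n := x) (by omega),
    padicValNat.eq_zero_of_not_dvd (p := 3) (n := x + d) (by omega)] at this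
  omega

lemma eight_dvd_and_nine_dvd (H : ParityPeriodOn 2 3 s m d) (hm : 48 ≤ m) : 8 ∣ d ∧ 9 ∣ d := by
  have h2 : 2 ^ 1 ∣ d := by simpa using H.two_dvd (by omega)
  have h3 : 3 ^ 1 ∣ d := H.symm.pow_succ_dvd_of_dvd (k := 0) (by norm_num) h2 (by simp)
    (by norm_num; omega)
  have h4 : 2 ^ 2 ∣ d := H.pow_succ_dvd_of_dvd (by norm_num) h3 h2 (by norm_num; omega)
  have h8 : 2 ^ 3 ∣ d := H.pow_succ_dvd_of_dvd (by norm_num) h3 h4 (by norm_num; omega)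
  have h9 : 3 ^ 2 ∣ d := H.symm.pow_succ_dvd_of_pow_dvd (by norm_num) (by norm_num) h8 h3
    (by norm_num; omega)
  exact ⟨h8, h9⟩

lemma two_pow_dvd (H : ParityPeriodOn 2 3 s m d) (h9 : 9 ∣ d) :
    ∀ a, 2 ^ (a + 1) ≤ m → 2 ^ a ∣ d
  | 0, _ => by simp
  | a + 1, hm => H.pow_succ_dvd_of_pow_dvd (j := 2) (by norm_num) (by norm_num) h9
      (two_pow_dvd H h9 a (le_trans (Nat.pow_le_pow_right (by norm_num) (by omega)) hm))
      (by rw [← pow_succ']; exact hm)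

lemma three_pow_dvd (H : ParityPeriodOn 2 3 s m d) (h8 : 8 ∣ d) :
    ∀ b, 2 * 3 ^ b ≤ m → 3 ^ b ∣ d
  | 0, _ => by simp
  | b + 1, hm => H.symm.pow_succ_dvd_of_pow_dvd (j := 3) (by norm_num) (by norm_num) h8
      (three_pow_dvd H h8 b (le_trans (Nat.mul_le_mul_left 2
        (Nat.pow_le_pow_right (by norm_num) (by omega))) hm)) hm

lemma two_pow_mul_three_pow_dvd (H : ParityPeriodOn 2 3 s m d) (hm : 48 ≤ m) {a b : ℕ}
    (ha : 2 ^ (a + 1) ≤ m) (hb : 2 * 3 ^ b ≤ m) : 2 ^ a * 3 ^ b ∣ d :=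
  have ⟨h8, h9⟩ := H.eight_dvd_and_nine_dvd hm
  (Nat.Coprime.pow a b (by norm_num)).mul_dvd_of_dvd_of_dvd (H.two_pow_dvd h9 a ha)
    (H.three_pow_dvd h8 b hb)

end ParityPeriodOn

lemma le_subwordComplexity_of_injOn {α : Type*} {u : ℕ → α} (hu : (Set.range u).Finite)
    {m K : ℕ} (h : Set.InjOn (fun s (i : Fin m) => u (s + i)) (Set.Iio K)) :
    K ≤ subwordComplexity u m := by
  have hfin : (Set.range fun s (i : Fin m) => u (s + i)).Finite :=
    (Set.Finite.pi' fun _ => hu).subset (by rintro _ ⟨s, rfl⟩ i; exact Set.mem_range_self _)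
  simpa [subwordComplexity, ← Finset.coe_range] using
    Set.ncard_le_ncard_of_injOn _ (fun s _ => Set.mem_range_self s) h hfin

lemma le_subwordComplexity_of_nodup {α : Type*} {u : ℕ → α} (hu : (Set.range u).Finite)
    {m K : ℕ} (h : ((List.range K).map fun s => List.ofFn fun i : Fin m => u (s + i)).Nodup) :
    K ≤ subwordComplexity u m :=
  le_subwordComplexity_of_injOn hu fun _ hs _ ht hst =>
    List.inj_on_of_nodup_map h (List.mem_range.2 hs) (List.mem_range.2 ht) (congrArg List.ofFn hst)

def sign23 (n : ℕ) : ℤ := (-1) ^ (padicValNat 2 (n + 1) + padicValNat 3 (n + 1))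

lemma finite_range_sign23 : (Set.range sign23).Finite :=
  (Set.toFinite {1, -1}).subset (by rintro _ ⟨n, rfl⟩; exact neg_one_pow_eq_or ℤ _)

lemma parityPeriodOn_of_window_eq {m s t : ℕ} (hst : s ≤ t)
    (h : (fun i : Fin m => sign23 (s + i)) = fun i : Fin m => sign23 (t + i)) :
    ParityPeriodOn 2 3 s m (t - s) := by
  intro n hn1 hn2
  have hi := congrFun h ⟨n - s - 1, by omega⟩
  simp only [sign23, show s + (n - s - 1) + 1 = n by omega,
    show t + (n - s - 1) + 1 = n + (t - s) by omega] at hi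
  rw [neg_one_pow_eq_pow_mod_two, neg_one_pow_eq_pow_mod_two (n := _ + _)] at hi
  rcases Nat.mod_two_eq_zero_or_one (padicValNat 2 n + padicValNat 3 n) with h1 | h1 <;>
  rcases Nat.mod_two_eq_zero_or_one (padicValNat 2 (n + (t - s)) + padicValNat 3 (n + (t - s)))
    with h2 | h2 <;> simp [h1, h2] at hi ⊢

lemma injOn_window_sign23 {m a b : ℕ} (hm : 48 ≤ m) (ha : 2 ^ (a + 1) ≤ m) (hb : 2 * 3 ^ b ≤ m) :
    Set.InjOn (fun s (i : Fin m) => sign23 (s + i)) (Set.Iio (2 ^ a * 3 ^ b)) := by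
  have key : ∀ s t, s < t → t < 2 ^ a * 3 ^ b →
      (fun i : Fin m => sign23 (s + i)) ≠ fun i : Fin m => sign23 (t + i) := fun s t hst ht h =>
    have hdvd := (parityPeriodOn_of_window_eq hst.le h).two_pow_mul_three_pow_dvd hm ha hb
    absurd (Nat.le_of_dvd (by omega) hdvd) (by omega)
  intro s hs t ht hst
  rcases lt_trichotomy s t with h | h | h
  · exact absurd hst (key s t h ht)
  · exact h
  · exact absurd hst.symm (key t s h hs)

lemma sq_succ_le_subwordComplexity_sign23 {m : ℕ} (hm : 48 ≤ m) :
    (m + 1) ^ 2 ≤ 24 * subwordComplexity sign23 m := by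
  obtain ⟨a, ha, ha'⟩ : ∃ a, 2 ^ a ≤ m / 2 ∧ m / 2 < 2 ^ a * 2 :=
    ⟨_, Nat.pow_log_le_self 2 (by omega), pow_succ 2 _ ▸ Nat.lt_pow_succ_log_self (by norm_num) _⟩
  obtain ⟨b, hb, hb'⟩ : ∃ b, 3 ^ b ≤ m / 2 ∧ m / 2 < 3 ^ b * 3 :=
    ⟨_, Nat.pow_log_le_self 3 (by omega), pow_succ 3 _ ▸ Nat.lt_pow_succ_log_self (by norm_num) _⟩
  have hP := le_subwordComplexity_of_injOn finite_range_sign23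
    (injOn_window_sign23 (a := a) (b := b) hm (by rw [pow_succ]; omega) (by omega))
  calc (m + 1) ^ 2 ≤ (4 * 2 ^ a) * (6 * 3 ^ b) := by
        rw [sq]; exact Nat.mul_le_mul (by omega) (by omega)
    _ = 24 * (2 ^ a * 3 ^ b) := by ring
    _ ≤ 24 * subwordComplexity sign23 m := Nat.mul_le_mul_left 24 hP

lemma nodup_windows_sign23 : ∀ n < 17, 1 ≤ n →
    ((List.range (((n + 1) ^ 2 + 5) / 6)).map fun s =>
      List.ofFn fun i : Fin (3 * n - 2) => sign23 (s + i)).Nodup := by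
  decide +kernel

theorem stmt7 :
    BigOmega (subwordComplexity (fun n => ((-1 : ℤ)) ^ (padicValNat 2 (n + 1) + padicValNat 3 (n + 1))))
      (fun n => n ^ 2) ∧
    ∀ n : ℕ, 1 ≤ n → ∃ r : ℕ, r ≤ 5 ∧
      ((n + 1) ^ 2 + 5) / 6 ≤
        subwordComplexity (fun n => ((-1 : ℤ)) ^ (padicValNat 2 (n + 1) + padicValNat 3 (n + 1)))
          (max (3 * n - 2) (r + 2 * n - 1)) := by
  refine ⟨⟨24, 48, by norm_num, fun n hn => ?_⟩, fun n hn => ⟨0, by norm_num, ?_⟩⟩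
  · exact (Nat.pow_le_pow_left n.le_succ 2).trans (sq_succ_le_subwordComplexity_sign23 hn)
  · rw [show max (3 * n - 2) (0 + 2 * n - 1) = 3 * n - 2 by omega]
    rcases lt_or_ge n 17 with hsmall | hlarge
    · exact le_subwordComplexity_of_nodup finite_range_sign23 (nodup_windows_sign23 n hsmall hn)
    · have h := sq_succ_le_subwordComplexity_sign23 (m := 3 * n - 2) (by omega)
      have h4 : 4 * (n + 1) ^ 2 ≤ (3 * n - 2 + 1) ^ 2 := by
        rw [show 4 * (n + 1) ^ 2 = (2 * n + 2) ^ 2 by ring]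
        exact Nat.pow_le_pow_left (by omega) 2
      change _ ≤ subwordComplexity sign23 _
      omega
end

section
/- The sequence u(n) = (−1)^{v_2(n)+v_3(n)} (for n ≥ 1) is not k-automatic for any integer k ≥ 2. -/
/-- Exact valuation from divisibility sandwich. -/
private lemma pv_eq_of {p : ℕ} [Fact p.Prime] {X M : ℕ} (hX : X ≠ 0)
    (h1 : p ^ M ∣ X) (h2 : ¬ p ^ (M + 1) ∣ X) : padicValNat p X = M := by
  have hle := (padicValNat_dvd_iff_le hX).mp h1
  have hlt : ¬ (M + 1 ≤ padicValNat p X) := fun h => h2 ((padicValNat_dvd_iff_le hX).mpr h)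
  omega

/-- Exact valuation from a congruence `X ≡ p^M [MOD p^(M+1)]`. -/
private lemma pv_of_modeq {p : ℕ} [hp : Fact p.Prime] {X M : ℕ}
    (h : X ≡ p ^ M [MOD p ^ (M + 1)]) : padicValNat p X = M ∧ X ≠ 0 := by
  have hplt : p ^ M < p ^ (M + 1) :=
    Nat.pow_lt_pow_succ hp.out.one_lt
  have hmod : X % p ^ (M + 1) = p ^ M := by
    have h' : X % p ^ (M + 1) = p ^ M % p ^ (M + 1) := h
    rwa [Nat.mod_eq_of_lt hplt] at h'
  have hpM : p ^ M ≠ 0 := pow_ne_zero _ hp.out.pos.ne'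
  have hX : X ≠ 0 := by
    intro h0; rw [h0, Nat.zero_mod] at hmod; exact hpM hmod.symm
  refine ⟨pv_eq_of hX ?_ ?_, hX⟩
  · have hXeq : X = p ^ (M + 1) * (X / p ^ (M + 1)) + p ^ M := by
      conv_lhs => rw [← Nat.div_add_mod X (p ^ (M + 1))]
      rw [hmod]
    rw [hXeq]
    exact dvd_add (Dvd.dvd.mul_right (pow_dvd_pow p (Nat.le_succ M)) _) dvd_rfl
  · intro hdvd
    have : X % p ^ (M + 1) = 0 := Nat.mod_eq_zero_of_dvd hdvd
    rw [this] at hmod; exact hpM hmod.symm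

/-- Transfer lemma: from exact control at level `E` get exact value `v_p(b^D - 1)` at level `e`. -/
private lemma pv_transfer {p b D : ℕ} [hp : Fact p.Prime] (hpb : ¬ p ∣ b) (hb : 2 ≤ b)
    (hD : 1 ≤ D) {X Y : ℕ} (hXY : b ^ D * Y = X + (b ^ D - 1))
    (hdvd : p ^ (padicValNat p (b ^ D - 1) + 1) ∣ X) :
    padicValNat p Y = padicValNat p (b ^ D - 1) := by
  set j := padicValNat p (b ^ D - 1) with hj
  have hbD : 2 ≤ b ^ D := le_trans hb (Nat.le_self_pow (by omega) b)
  have hne : b ^ D - 1 ≠ 0 := by omega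
  have hYne : Y ≠ 0 := by
    rintro rfl
    rw [mul_zero] at hXY
    omega
  have h1 : p ^ j ∣ b ^ D * Y := by
    rw [hXY]
    exact dvd_add (dvd_trans (pow_dvd_pow p (Nat.le_succ j)) hdvd) pow_padicValNat_dvd
  have h2 : ¬ p ^ (j + 1) ∣ b ^ D * Y := by
    rw [hXY]
    intro hc
    exact (pow_succ_padicValNat_not_dvd hne) ((Nat.dvd_add_right hdvd).mp hc)
  have hbDne : b ^ D ≠ 0 := by omega
  have hmul : padicValNat p (b ^ D * Y) = padicValNat p Y := by
    rw [padicValNat.mul hbDne hYne,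
      padicValNat.eq_zero_of_not_dvd (fun h => hpb (hp.out.dvd_of_dvd_pow h)), zero_add]
  rw [← hmul]
  exact pv_eq_of (by positivity) h1 h2

/-- Solvability of `b * n + 1 ≡ T [MOD N]` when `b` is invertible mod `N`. -/
private lemma exists_modeq (b N T : ℕ) (hN : 0 < N) (hco : Nat.Coprime b N) (hT : 1 ≤ T) :
    ∃ n : ℕ, b * n + 1 ≡ T [MOD N] := by
  haveI : NeZero N := ⟨hN.ne'⟩
  obtain ⟨u, hu⟩ := (ZMod.isUnit_iff_coprime b N).mpr hco
  refine ⟨((u⁻¹ : (ZMod N)ˣ) * ((T - 1 : ℕ) : ZMod N) : ZMod N).val, ?_⟩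
  rw [← ZMod.natCast_eq_natCast_iff]
  push_cast
  rw [ZMod.natCast_val, ZMod.cast_id]
  have : (b : ZMod N) * ((u⁻¹ : (ZMod N)ˣ) * ((T - 1 : ℕ) : ZMod N)) = ((T - 1 : ℕ) : ZMod N) := by
    rw [← hu, ← mul_assoc, Units.mul_inv, one_mul]
  rw [this]
  have hT1 : (T - 1) + 1 = T := by omega
  rw [← hT1]
  push_cast
  ring

/-- Engine for `gcd(b,6)=1`: tune both the 2-adic and 3-adic valuations. -/
private lemma engine1 {b : ℕ} (hb : 2 ≤ b) (h2 : ¬ 2 ∣ b) (h3 : ¬ 3 ∣ b)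
    {e E : ℕ} (hlt : e < E) (L : ℕ) (hL : 1 ≤ L) :
    ∃ n : ℕ,
      padicValNat 2 (b ^ E * n + 1) + padicValNat 3 (b ^ E * n + 1)
        = (padicValNat 2 (b ^ e * n + 1) + padicValNat 3 (b ^ e * n + 1)) + (L + 1) := by
  set D := E - e with hD
  have hD1 : 1 ≤ D := by omega
  set j2 := padicValNat 2 (b ^ D - 1) with hj2
  set j3 := padicValNat 3 (b ^ D - 1) with hj3
  set M2 := j2 + L with hM2
  set M3 := j3 + 1 with hM3
  have hco23 : Nat.Coprime (2 ^ (M2 + 1)) (3 ^ (M3 + 1)) :=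
    Nat.Coprime.pow _ _ (by norm_num)
  obtain ⟨T, hT2, hT3⟩ := Nat.chineseRemainder hco23 (2 ^ M2) (3 ^ M3)
  have hT1 : 1 ≤ T := by
    rcases Nat.eq_zero_or_pos T with h0 | h
    swap
    · exact h
    exfalso
    have h' : (0 : ℕ) % 2 ^ (M2 + 1) = 2 ^ M2 % 2 ^ (M2 + 1) := h0 ▸ hT2
    rw [Nat.zero_mod, Nat.mod_eq_of_lt (Nat.pow_lt_pow_succ one_lt_two)] at h'
    exact (pow_ne_zero M2 two_ne_zero) h'.symm
  have hcob : Nat.Coprime (b ^ E) (2 ^ (M2 + 1) * 3 ^ (M3 + 1)) := by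
    apply Nat.Coprime.mul_right
    · exact Nat.Coprime.pow _ _ ((Nat.Prime.coprime_iff_not_dvd Nat.prime_two).mpr h2).symm
    · exact Nat.Coprime.pow _ _ ((Nat.Prime.coprime_iff_not_dvd Nat.prime_three).mpr h3).symm
  obtain ⟨n, hn⟩ := exists_modeq (b ^ E) _ T (by positivity) hcob hT1
  have hn2 : b ^ E * n + 1 ≡ 2 ^ M2 [MOD 2 ^ (M2 + 1)] :=
    (Nat.ModEq.of_dvd (dvd_mul_right _ _) hn).trans hT2
  have hn3 : b ^ E * n + 1 ≡ 3 ^ M3 [MOD 3 ^ (M3 + 1)] :=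
    (Nat.ModEq.of_dvd (dvd_mul_left _ _) hn).trans hT3
  obtain ⟨hv2, hXne⟩ := pv_of_modeq hn2
  obtain ⟨hv3, -⟩ := pv_of_modeq hn3
  have hbpos : 1 ≤ b ^ D := Nat.one_le_pow _ _ (by omega)
  have hid : b ^ D * (b ^ e * n + 1) = (b ^ E * n + 1) + (b ^ D - 1) := by
    have hbe : b ^ D * b ^ e = b ^ E := by rw [← pow_add]; congr 1; omega
    calc b ^ D * (b ^ e * n + 1) = (b ^ D * b ^ e) * n + b ^ D := by ring
      _ = b ^ E * n + b ^ D := by rw [hbe]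
      _ = (b ^ E * n + 1) + (b ^ D - 1) := by omega
  have hXdvd2 : 2 ^ (j2 + 1) ∣ b ^ E * n + 1 := by
    have h' : 2 ^ M2 ∣ b ^ E * n + 1 := by rw [← hv2]; exact pow_padicValNat_dvd
    exact dvd_trans (pow_dvd_pow 2 (by omega)) h'
  have hXdvd3 : 3 ^ (j3 + 1) ∣ b ^ E * n + 1 := by
    have h' : 3 ^ M3 ∣ b ^ E * n + 1 := by rw [← hv3]; exact pow_padicValNat_dvd
    exact dvd_trans (pow_dvd_pow 3 (by omega)) h'
  have he2 := pv_transfer h2 hb hD1 hid hXdvd2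
  have he3 := pv_transfer h3 hb hD1 hid hXdvd3
  exact ⟨n, by rw [hv2, hv3, he2, he3]; omega⟩

/-- Engine for `q ∣ b`, `¬ p ∣ b`: tune the `p`-adic valuation, `q`-adic one vanishes. -/
private lemma engine2 {p q b : ℕ} [hp : Fact p.Prime] [hq : Fact q.Prime]
    (hpb : ¬ p ∣ b) (hqb : q ∣ b) (hb : 2 ≤ b)
    {e E : ℕ} (he : 1 ≤ e) (hlt : e < E) (L : ℕ) (hL : 1 ≤ L) :
    ∃ n : ℕ, padicValNat p (b ^ E * n + 1) = padicValNat p (b ^ e * n + 1) + L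
      ∧ padicValNat q (b ^ E * n + 1) = 0 ∧ padicValNat q (b ^ e * n + 1) = 0 := by
  set D := E - e with hD
  have hD1 : 1 ≤ D := by omega
  set j := padicValNat p (b ^ D - 1) with hj
  set M := j + L with hM
  have hcob : Nat.Coprime (b ^ E) (p ^ (M + 1)) :=
    Nat.Coprime.pow _ _ ((Nat.Prime.coprime_iff_not_dvd hp.out).mpr hpb).symm
  obtain ⟨n, hn⟩ :=
    exists_modeq (b ^ E) _ (p ^ M) (pow_pos hp.out.pos _) hcob (Nat.one_le_pow _ _ hp.out.pos)
  obtain ⟨hvE, hXne⟩ := pv_of_modeq hn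
  have hbpos : 1 ≤ b ^ D := Nat.one_le_pow _ _ (by omega)
  have hid : b ^ D * (b ^ e * n + 1) = (b ^ E * n + 1) + (b ^ D - 1) := by
    have hbe : b ^ D * b ^ e = b ^ E := by rw [← pow_add]; congr 1; omega
    calc b ^ D * (b ^ e * n + 1) = (b ^ D * b ^ e) * n + b ^ D := by ring
      _ = b ^ E * n + b ^ D := by rw [hbe]
      _ = (b ^ E * n + 1) + (b ^ D - 1) := by omega
  have hXdvd : p ^ (j + 1) ∣ b ^ E * n + 1 := by
    have h' : p ^ M ∣ b ^ E * n + 1 := by rw [← hvE]; exact pow_padicValNat_dvd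
    exact dvd_trans (pow_dvd_pow p (by omega)) h'
  have hve := pv_transfer hpb hb hD1 hid hXdvd
  have hq0 : ∀ m : ℕ, 1 ≤ m → padicValNat q (b ^ m * n + 1) = 0 := by
    intro m hm
    apply padicValNat.eq_zero_of_not_dvd
    intro hdq
    have h1 : q ∣ b ^ m * n := Dvd.dvd.mul_right (dvd_pow hqb (by omega)) n
    have h2 : q ∣ 1 := (Nat.dvd_add_right h1).mp hdq
    have h3 := Nat.dvd_one.mp h2
    have h4 := hq.out.one_lt
    omega
  exact ⟨n, by rw [hvE, hve], hq0 E (by omega), hq0 e he⟩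

private lemma pow_neg_one_ne {A B : ℕ} (h : ∃ m, B = A + (2 * m + 1)) :
    ((-1 : ℤ)) ^ A ≠ (-1) ^ B := by
  obtain ⟨m, rfl⟩ := h
  rw [pow_add, pow_succ, pow_mul, neg_one_sq, one_pow, one_mul, mul_neg_one]
  intro h
  have h0 : ((-1 : ℤ)) ^ A ≠ 0 := pow_ne_zero _ (by norm_num)
  exact h0 (by linarith)

private lemma exponent_split (α β e b n : ℕ) (hb : 1 ≤ b) :
    padicValNat 2 (2 ^ (α * e) * 3 ^ (β * e) * (b ^ e * n + 1))
      + padicValNat 3 (2 ^ (α * e) * 3 ^ (β * e) * (b ^ e * n + 1))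
    = (α + β) * e
      + (padicValNat 2 (b ^ e * n + 1) + padicValNat 3 (b ^ e * n + 1)) := by
  have hx : b ^ e * n + 1 ≠ 0 := by positivity
  have h2 : (2 : ℕ) ^ (α * e) ≠ 0 := by positivity
  have h3 : (3 : ℕ) ^ (β * e) ≠ 0 := by positivity
  rw [padicValNat.mul (p := 2) (by positivity) hx, padicValNat.mul (p := 3) (by positivity) hx,
    padicValNat.mul (p := 2) h2 h3, padicValNat.mul (p := 3) h2 h3,
    padicValNat.prime_pow, padicValNat.prime_pow,
    padicValNat.eq_zero_of_not_dvd (p := 2)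
      (fun h => (by norm_num : ¬ (2 : ℕ) ∣ 3) (Nat.Prime.dvd_of_dvd_pow Nat.prime_two h)),
    padicValNat.eq_zero_of_not_dvd (p := 3)
      (fun h => (by norm_num : ¬ (3 : ℕ) ∣ 2) (Nat.Prime.dvd_of_dvd_pow Nat.prime_three h))]
  ring

private lemma family_distinct (α β b : ℕ) (hb : 2 ≤ b)
    (hcase : (¬ 2 ∣ b ∧ ¬ 3 ∣ b) ∨ (3 ∣ b ∧ ¬ 2 ∣ b) ∨ (2 ∣ b ∧ ¬ 3 ∣ b))
    {e E : ℕ} (he : 1 ≤ e) (hlt : e < E) :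
    ∃ n : ℕ,
      ((-1 : ℤ)) ^ ((α + β) * e + (padicValNat 2 (b ^ e * n + 1) + padicValNat 3 (b ^ e * n + 1)))
        ≠ (-1) ^ ((α + β) * E
            + (padicValNat 2 (b ^ E * n + 1) + padicValNat 3 (b ^ E * n + 1))) := by
  set t := (α + β) * (E - e) with ht
  have htE : (α + β) * E = (α + β) * e + t := by
    rw [ht, ← Nat.mul_add]
    congr 1
    omega
  rcases hcase with ⟨h2, h3⟩ | ⟨h3d, h2⟩ | ⟨h2d, h3⟩
  · obtain ⟨n, hn⟩ := engine1 hb h2 h3 hlt (t + 2) (by omega)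
    exact ⟨n, pow_neg_one_ne ⟨t + 1, by omega⟩⟩
  · obtain ⟨n, hn, hq1, hq2⟩ := engine2 (p := 2) (q := 3) h2 h3d hb he hlt (t + 1) (by omega)
    exact ⟨n, pow_neg_one_ne ⟨t, by omega⟩⟩
  · obtain ⟨n, hn, hq1, hq2⟩ := engine2 (p := 3) (q := 2) h3 h2d hb he hlt (t + 1) (by omega)
    exact ⟨n, pow_neg_one_ne ⟨t, by omega⟩⟩

private lemma master (k α β b : ℕ) (hdecomp : k = 2 ^ α * 3 ^ β * b) (hb : 2 ≤ b)
    (hcase : (¬ 2 ∣ b ∧ ¬ 3 ∣ b) ∨ (3 ∣ b ∧ ¬ 2 ∣ b) ∨ (2 ∣ b ∧ ¬ 3 ∣ b)) :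
    ¬ IsAutomatic k (fun n => ((-1 : ℤ)) ^ (padicValNat 2 (n + 1) + padicValNat 3 (n + 1))) := by
  intro hfin
  set u : ℕ → ℤ := fun n => ((-1 : ℤ)) ^ (padicValNat 2 (n + 1) + padicValNat 3 (n + 1)) with hu
  set s : ℕ → ℕ := fun e => 2 ^ (α * e) * 3 ^ (β * e) with hs
  have hs1 : ∀ e, 1 ≤ s e := by
    intro e
    simp only [hs]
    exact Nat.one_le_iff_ne_zero.mpr (by positivity)
  have hkpow : ∀ e, k ^ e = s e * b ^ e := by
    intro e
    simp only [hs]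
    rw [hdecomp, mul_pow, mul_pow, pow_mul, pow_mul]
  have hslt : ∀ e, s e - 1 < k ^ e := by
    intro e
    have h1 := hs1 e
    have h2 : s e ≤ k ^ e := by
      rw [hkpow e]
      have hbe : 0 < b ^ e := by positivity
      exact Nat.le_mul_of_pos_right _ hbe
    omega
  set g : ℕ → (ℕ → ℤ) := fun i => fun n => u (k ^ (i + 1) * n + (s (i + 1) - 1)) with hg
  have hval : ∀ i n, g i n
      = (-1) ^ ((α + β) * (i + 1)
          + (padicValNat 2 (b ^ (i + 1) * n + 1) + padicValNat 3 (b ^ (i + 1) * n + 1))) := by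
    intro i n
    have h1 := hs1 (i + 1)
    have harg : k ^ (i + 1) * n + (s (i + 1) - 1) + 1
        = 2 ^ (α * (i + 1)) * 3 ^ (β * (i + 1)) * (b ^ (i + 1) * n + 1) := by
      have hk := hkpow (i + 1)
      calc k ^ (i + 1) * n + (s (i + 1) - 1) + 1 = k ^ (i + 1) * n + s (i + 1) := by omega
        _ = s (i + 1) * (b ^ (i + 1) * n) + s (i + 1) := by rw [hk]; ring
        _ = s (i + 1) * (b ^ (i + 1) * n + 1) := by ring
        _ = 2 ^ (α * (i + 1)) * 3 ^ (β * (i + 1)) * (b ^ (i + 1) * n + 1) := by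
            simp only [hs]
    simp only [hg, hu]
    rw [harg]
    exact congrArg (fun t => ((-1 : ℤ)) ^ t) (exponent_split α β (i + 1) b n (by omega))
  have hne : ∀ i j : ℕ, i < j → g i ≠ g j := by
    intro i j hij hgeq
    obtain ⟨n, hn⟩ :=
      family_distinct α β b hb hcase (e := i + 1) (E := j + 1) (by omega) (by omega)
    exact hn (by rw [← hval i n, ← hval j n, hgeq])
  have hinj : Function.Injective g := by
    intro i j hgeq
    by_contra hne2
    rcases Nat.lt_or_ge i j with h | h
    · exact hne i j h hgeq
    · exact hne j i (by omega) hgeq.symm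
  have hmem : ∀ i, g i ∈ {v : ℕ → ℤ | ∃ e r : ℕ, r < k ^ e ∧ v = fun n => u (k ^ e * n + r)} := by
    intro i
    exact ⟨i + 1, s (i + 1) - 1, hslt _, rfl⟩
  exact Set.infinite_of_injective_forall_mem hinj hmem hfin

private lemma not_dvd_div_pow {p n : ℕ} [Fact p.Prime] (hn : n ≠ 0) :
    ¬ p ∣ n / p ^ padicValNat p n := by
  intro h
  obtain ⟨m, hm⟩ := h
  have hdvd : p ^ padicValNat p n ∣ n := pow_padicValNat_dvd
  have heq : n = p ^ (padicValNat p n + 1) * m := by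
    rw [pow_succ]
    calc n = p ^ padicValNat p n * (n / p ^ padicValNat p n) := (Nat.mul_div_cancel' hdvd).symm
      _ = p ^ padicValNat p n * (p * m) := by rw [hm]
      _ = p ^ padicValNat p n * p * m := by ring
  exact pow_succ_padicValNat_not_dvd hn ⟨m, heq⟩

theorem stmt8 (k : ℕ) (hk : 2 ≤ k) :
    ¬ IsAutomatic k (fun n => ((-1 : ℤ)) ^ (padicValNat 2 (n + 1) + padicValNat 3 (n + 1))) := by
  set c := padicValNat 2 k with hc
  have h2c : 2 ^ c ∣ k := pow_padicValNat_dvd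
  set k1 := k / 2 ^ c with hk1def
  have hk1 : k = 2 ^ c * k1 := (Nat.mul_div_cancel' h2c).symm
  have hk1ne : k1 ≠ 0 := by
    intro h0
    rw [h0, mul_zero] at hk1
    omega
  have h2k1 : ¬ 2 ∣ k1 := not_dvd_div_pow (by omega)
  set d := padicValNat 3 k1 with hd
  have h3d : 3 ^ d ∣ k1 := pow_padicValNat_dvd
  set b := k1 / 3 ^ d with hbdef
  have hk2 : k1 = 3 ^ d * b := (Nat.mul_div_cancel' h3d).symm
  have hbne : b ≠ 0 := by
    intro h0
    rw [h0, mul_zero] at hk2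
    exact hk1ne hk2
  have h3b : ¬ 3 ∣ b := not_dvd_div_pow hk1ne
  have h2b : ¬ 2 ∣ b := by
    intro hdvd
    exact h2k1 (by rw [hk2]; exact Dvd.dvd.mul_left hdvd _)
  have hdecomp : k = 2 ^ c * 3 ^ d * b := by rw [hk1, hk2]; ring
  rcases Nat.lt_or_ge b 2 with hb1 | hb2
  · have hbone : b = 1 := Nat.le_antisymm (Nat.lt_succ_iff.mp hb1) (Nat.one_le_iff_ne_zero.mpr hbne)
    rcases Nat.eq_zero_or_pos d with hd0 | hd1
    · have hk2c : k = 2 ^ c := by rw [hdecomp, hbone, hd0]; ring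
      have hcpos : 1 ≤ c := by
        by_contra h
        push_neg at h
        have hc0 : c = 0 := by omega
        rw [hc0, pow_zero] at hk2c
        omega
      apply master k 0 0 k (by norm_num) hk
      right; right
      constructor
      · rw [hk2c]; exact dvd_pow_self 2 (by omega)
      · rw [hk2c]
        intro h
        have h' := Nat.Prime.dvd_of_dvd_pow Nat.prime_three h
        norm_num at h'
    · apply master k c (d - 1) 3 ?_ (by norm_num) ?_
      · have hd' : (3 : ℕ) ^ d = 3 ^ (d - 1) * 3 := by
          rw [← pow_succ]
          congr 1
          omega
        rw [hdecomp, hbone, mul_one, hd']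
        ring
      · right; left; exact ⟨dvd_refl 3, by norm_num⟩
  · exact master k c d b hdecomp hb2 (Or.inl ⟨h2b, h3b⟩)
end

section
/- The sequences a(n) = (−1)^{v_2(3n+1)} and b(n) = (−1)^{v_3(2n+1)} (for n ≥ 0) are not ultimately periodic. -/
private def sgeo : ℕ → ℕ
  | 0 => 0
  | e + 1 => 4 * sgeo e + 1

private lemma sgeo_spec (e : ℕ) : 3 * sgeo e + 1 = 4 ^ e := by
  induction e with
  | zero => simp [sgeo]
  | succ e ih => rw [sgeo, pow_succ]; omega

private def tgeo : ℕ → ℕ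
  | 0 => 0
  | e + 1 => 3 * tgeo e + 1

private lemma tgeo_spec (e : ℕ) : 2 * tgeo e + 1 = 3 ^ e := by
  induction e with
  | zero => simp [tgeo]
  | succ e ih => rw [tgeo, pow_succ]; omega

private lemma val_eq_of_dvd {p : ℕ} [Fact p.Prime] {a e : ℕ} (ha : a ≠ 0)
    (h1 : p ^ e ∣ a) (h2 : ¬ p ^ (e + 1) ∣ a) : padicValNat p a = e := by
  rw [padicValNat_dvd_iff_le ha] at h1 h2
  omega

private lemma not_up_aux (p c : ℕ) (hp : p.Prime) (hc : 0 < c)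
    (H : ∀ e N : ℕ, 1 ≤ e → ∃ n, N ≤ n ∧ p ^ e ∣ c * n + 1 ∧ ¬ p ^ (e + 1) ∣ c * n + 1) :
    ¬ UltimatelyPeriodic (fun n => ((-1 : ℤ)) ^ padicValNat p (c * n + 1)) := by
  have : Fact p.Prime := ⟨hp⟩
  rintro ⟨N, T, hT, hper⟩
  set v := padicValNat p (c * T) with hv
  obtain ⟨n, hn, hd, hnd⟩ := H (v + 1) N (by omega)
  have h1 : padicValNat p (c * n + 1) = v + 1 :=
    val_eq_of_dvd (by positivity) hd hnd
  have hcT : c * T ≠ 0 := by positivity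
  have h2 : padicValNat p (c * (n + T) + 1) = v := by
    have heq : c * (n + T) + 1 = (c * n + 1) + c * T := by ring
    apply val_eq_of_dvd (by positivity)
    · rw [heq]
      exact dvd_add (dvd_trans (pow_dvd_pow p (by omega)) hd) pow_padicValNat_dvd
    · rw [heq]
      intro hcon
      have hTnd : ¬ p ^ (v + 1) ∣ c * T := pow_succ_padicValNat_not_dvd hcT
      exact hTnd ((Nat.dvd_add_right (dvd_trans (pow_dvd_pow p (le_refl _)) hd)).mp hcon)
  have := hper n hn
  simp only [h1, h2] at this
  rw [pow_succ] at this
  rcases Nat.even_or_odd v with h | h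
  · rw [h.neg_one_pow] at this; norm_num at this
  · rw [h.neg_one_pow] at this; norm_num at this

theorem stmt9 :
    ¬ UltimatelyPeriodic (fun n => ((-1 : ℤ)) ^ padicValNat 2 (3 * n + 1)) ∧
    ¬ UltimatelyPeriodic (fun n => ((-1 : ℤ)) ^ padicValNat 3 (2 * n + 1)) := by
  constructor
  · apply not_up_aux 2 3 Nat.prime_two (by norm_num)
    intro e N he
    set q := 2 ^ e with hq
    have hqpos : 0 < q := by positivity
    have h4 : 3 * sgeo e + 1 = q * q := by
      rw [sgeo_spec, hq, ← pow_add]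
      rw [show (4 : ℕ) = 2 ^ 2 by norm_num, ← pow_mul]
      ring_nf
    have h2q : 2 ∣ q := dvd_pow_self 2 (by omega)
    have hps : (2 : ℕ) ^ (e + 1) = q * 2 := pow_succ 2 e
    have heq : 3 * (sgeo e + q + 2 ^ (e + 1) * N) + 1 = q * (q + 3 + 6 * N) := by
      have h5 : 3 * (sgeo e + q + 2 ^ (e + 1) * N) + 1
          = (3 * sgeo e + 1) + 3 * q + 6 * (q * N) := by rw [hps]; ring
      rw [h5, h4]; ring
    refine ⟨sgeo e + q + 2 ^ (e + 1) * N, ?_, ?_, ?_⟩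
    · have : N ≤ 2 ^ (e + 1) * N := Nat.le_mul_of_pos_left N (by positivity)
      omega
    · exact ⟨q + 3 + 6 * N, heq⟩
    · intro hcon
      rw [heq, hps, mul_comm q 2] at hcon
      rcases hcon with ⟨k, hk⟩
      have h2 : q + 3 + 6 * N = 2 * k :=
        Nat.eq_of_mul_eq_mul_left hqpos (by linarith [hk])
      omega
  · apply not_up_aux 3 2 Nat.prime_three (by norm_num)
    intro e N _
    set q := 3 ^ e with hq
    have hqpos : 0 < q := by positivity
    have h3 : 2 * tgeo e + 1 = q := tgeo_spec e
    have hps : (3 : ℕ) ^ (e + 1) = q * 3 := pow_succ 3 e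
    have heq : 2 * (3 ^ (e + 1) * N + tgeo e) + 1 = q * (6 * N + 1) := by
      have h5 : 2 * (3 ^ (e + 1) * N + tgeo e) + 1
          = 6 * (q * N) + (2 * tgeo e + 1) := by rw [hps]; ring
      rw [h5, h3]; ring
    refine ⟨3 ^ (e + 1) * N + tgeo e, ?_, ?_, ?_⟩
    · have : N ≤ 3 ^ (e + 1) * N := Nat.le_mul_of_pos_left N (by positivity)
      omega
    · exact ⟨6 * N + 1, heq⟩
    · intro hcon
      rw [heq, hps, mul_comm q 3] at hcon
      rcases hcon with ⟨k, hk⟩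
      have h2 : 6 * N + 1 = 3 * k :=
        Nat.eq_of_mul_eq_mul_left hqpos (by linarith [hk])
      omega
end

section
/- Let u: ℕ* → K be completely multiplicative into a field K such that u(p) = 0 for only finitely many primes, and suppose there exists an integer d such that the set {p prime : u(p)^d ∉ {0_K, 1_K}} is finite and has cardinality at least 2. Then (u(n))_{n≥1} is not k-automatic for any k ≥ 2. -/
structure IsCompletelyMultiplicative {M : Type*} [Monoid M] (v : ℕ → M) : Prop where
  map_one : v 1 = 1
  map_mul : ∀ m n : ℕ, 0 < m → 0 < n → v (m * n) = v m * v n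

theorem IsAutomatic.comp {α β : Type*} {k : ℕ} {w : ℕ → α} (h : IsAutomatic k w) (f : α → β) :
    IsAutomatic k (f ∘ w) :=
  (h.image (f ∘ ·)).subset fun _ ⟨e, r, hr, hv⟩ => ⟨_, ⟨e, r, hr, rfl⟩, hv.symm⟩

theorem IsAutomatic.not_injective_kernel {α : Type*} {k : ℕ} {w : ℕ → α} (h : IsAutomatic k w) :
    ∃ M, ∀ e (r : Fin (M + 1) → ℕ), (∀ t, r t < k ^ e) →
      ¬ Function.Injective fun t n => w (k ^ e * n + r t) := by
  refine ⟨h.toFinset.card, fun e r hr hinj => ?_⟩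
  obtain ⟨a, -, b, -, hab, heq⟩ := Finset.exists_ne_map_eq_of_card_lt_of_maps_to
    (s := Finset.univ) (t := h.toFinset) (f := fun t n => w (k ^ e * n + r t)) (by simp)
    fun t _ => h.mem_toFinset.2 ⟨e, r t, hr t, rfl⟩
  exact hab (hinj heq)

theorem Nat.exists_mul_add_modEq {c N : ℕ} [NeZero N] (hc : c.Coprime N) (x y : ℕ) :
    ∃ n, c * n + x ≡ y [MOD N] := by
  refine ⟨(((y : ZMod N) - x) * (c : ZMod N)⁻¹).val, ?_⟩
  rw [← ZMod.natCast_eq_natCast_iff]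
  push_cast
  rw [ZMod.natCast_zmod_val, mul_left_comm, ZMod.coe_mul_inv_eq_one c hc, mul_one, sub_add_cancel]

theorem Nat.exists_eq_pow_mul_of_modEq_pow {P i R : ℕ} (hP : 1 < P)
    (h : R ≡ P ^ i [MOD P ^ (i + 1)]) :
    ∃ y, R = P ^ i * y ∧ ¬ P ∣ y := by
  have hmod : R % P ^ (i + 1) = P ^ i :=
    Eq.trans h (Nat.mod_eq_of_lt (Nat.pow_lt_pow_right hP i.lt_succ_self))
  refine ⟨P * (R / P ^ (i + 1)) + 1, ?_, fun hdvd => hP.ne' ?_⟩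
  · conv_lhs => rw [← Nat.div_add_mod R (P ^ (i + 1)), hmod]
    ring
  · exact Nat.dvd_one.1 ((Nat.dvd_add_right (dvd_mul_right _ _)).1 hdvd)

namespace IsCompletelyMultiplicative

variable {M : Type*}

theorem pow [CommMonoid M] {v : ℕ → M} (hv : IsCompletelyMultiplicative v) (d : ℕ) :
    IsCompletelyMultiplicative fun n => v n ^ d where
  map_one := by simp only [hv.map_one, one_pow]
  map_mul m n hm hn := by simp only [hv.map_mul m n hm hn, mul_pow]

section Monoid

variable [Monoid M] {v : ℕ → M}

theorem _root_.Nat.exists_coprime_forall_prime_not_dvd {P : ℕ} (hP : P.Prime)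
    (hfin : {s | s.Prime ∧ v s ≠ 1}.Finite) :
    ∃ m, P.Coprime m ∧ ∀ s, s.Prime → ¬ s ∣ P * m → v s = 1 := by
  refine ⟨∏ s ∈ hfin.toFinset.erase P, s, Nat.Coprime.prod_right fun s hs => ?_,
    fun s hs hsPm => by_contra fun hs1 => hsPm (dvd_mul_of_dvd_right ?_ P)⟩
  · obtain ⟨hsP, hsT⟩ := Finset.mem_erase.1 hs
    exact (Nat.coprime_primes hP (hfin.mem_toFinset.1 hsT).1).2 hsP.symm
  · refine Finset.dvd_prod_of_mem _ (Finset.mem_erase.2 ⟨?_, hfin.mem_toFinset.2 ⟨hs, hs1⟩⟩)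
    rintro rfl
    exact hsPm (dvd_mul_right s _)

theorem map_pow (hv : IsCompletelyMultiplicative v) {x : ℕ} (hx : 0 < x) (i : ℕ) :
    v (x ^ i) = v x ^ i := by
  induction i with
  | zero => simpa using hv.map_one
  | succ i ih => rw [pow_succ, hv.map_mul _ _ (by positivity) hx, ih, pow_succ]

theorem map_eq_one_of_coprime (hv : IsCompletelyMultiplicative v) {N : ℕ}
    (hN : ∀ s, s.Prime → ¬ s ∣ N → v s = 1) {y : ℕ} (hy : y ≠ 0) (hyN : y.Coprime N) :
    v y = 1 := by
  induction y using Nat.recOnMul with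
  | zero => exact absurd rfl hy
  | one => exact hv.map_one
  | prime s hs => exact hN s hs ((Nat.Prime.coprime_iff_not_dvd hs).1 hyN)
  | mul a b ha hb =>
    obtain ⟨ha0, hb0⟩ := mul_ne_zero_iff.1 hy
    rw [hv.map_mul a b (Nat.pos_of_ne_zero ha0) (Nat.pos_of_ne_zero hb0),
      ha ha0 (Nat.Coprime.coprime_mul_right hyN), hb hb0 (Nat.Coprime.coprime_mul_left hyN),
      one_mul]

theorem map_prime_pow_mul (hv : IsCompletelyMultiplicative v) {P m : ℕ} (hP : P.Prime)
    (hgood : ∀ s, s.Prime → ¬ s ∣ P * m → v s = 1) (i : ℕ) {z : ℕ} (hz : z ≠ 0) (hPz : ¬ P ∣ z)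
    (hzm : z.Coprime m) : v (P ^ i * z) = v P ^ i := by
  have hzPm : z.Coprime (P * m) := Nat.Coprime.mul_right ((hP.coprime_iff_not_dvd.2 hPz).symm) hzm
  rw [hv.map_mul _ _ (pow_pos hP.pos i) (Nat.pos_of_ne_zero hz), hv.map_pow hP.pos,
    hv.map_eq_one_of_coprime hgood hz hzPm, mul_one]

end Monoid

section CancelMulZero

variable [MonoidWithZero M] [IsCancelMulZero M] {v : ℕ → M}

theorem eq_of_map_mul_add_eq (hv : IsCompletelyMultiplicative v) {P m : ℕ} (hP : P.Prime)
    (hP0 : v P ≠ 0) (hP1 : v P ≠ 1) (hPm : P.Coprime m)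
    (hgood : ∀ s, s.Prime → ¬ s ∣ P * m → v s = 1) {c : ℕ} (hc : c.Coprime P)
    {σ σ' : ℕ} (hσ : σ.Coprime m) (hσ' : σ'.Coprime m)
    (h : ∀ n, v (c * (m * n) + σ) = v (c * (m * n) + σ')) : σ = σ' := by
  wlog hlt : σ < σ' generalizing σ σ'
  · rcases (not_lt.1 hlt).lt_or_eq with hgt | heq
    · exact (this hσ' hσ (fun n => (h n).symm) hgt).symm
    · exact heq.symm
  exfalso
  obtain ⟨j, D, hPD, hD⟩ := Nat.exists_eq_pow_mul_and_not_dvd (n := σ' - σ) (by omega) P hP.ne_one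
  have : NeZero (P ^ (j + 2)) := ⟨pow_ne_zero _ hP.ne_zero⟩
  obtain ⟨n, hn⟩ := Nat.exists_mul_add_modEq (c := c * m)
    ((Nat.Coprime.mul_left hc hPm.symm).pow_right (j + 2)) σ (P ^ (j + 1))
  obtain ⟨y, hy, hPy⟩ := Nat.exists_eq_pow_mul_of_modEq_pow hP.one_lt hn
  have hR : c * (m * n) + σ = P ^ (j + 1) * y := by rw [← hy]; ring
  have hR' : c * (m * n) + σ' = P ^ j * (P * y + D) := by
    have : σ' = σ + (σ' - σ) := by omega
    rw [this, hD, ← add_assoc, hR]; ring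
  have hRm : ∀ τ, τ.Coprime m → (c * (m * n) + τ).Coprime m := fun τ hτ => by
    rw [add_comm, show c * (m * n) = m * (c * n) by ring]
    exact (Nat.coprime_add_mul_left_left τ m _).2 hτ
  have hy0 : y ≠ 0 := by rintro rfl; exact hPy (dvd_zero P)
  have hD0 : D ≠ 0 := by rintro rfl; exact hPD (dvd_zero P)
  have hval := h n
  rw [hR, hR', hv.map_prime_pow_mul hP hgood _ hy0 hPy
      (Nat.Coprime.coprime_dvd_left (dvd_mul_left _ _) (hR ▸ hRm σ hσ)),
    hv.map_prime_pow_mul hP hgood _ (by omega)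
      (fun h => hPD ((Nat.dvd_add_right (dvd_mul_right P y)).1 h))
      (Nat.Coprime.coprime_dvd_left (dvd_mul_left _ _) (hR' ▸ hRm σ' hσ'))] at hval
  exact hP1 (mul_left_cancel₀ (pow_ne_zero j hP0) (by rw [← pow_succ, mul_one, hval]))

end CancelMulZero

end IsCompletelyMultiplicative

theorem IsCompletelyMultiplicative.not_isAutomatic {M : Type*} [MonoidWithZero M]
    [IsCancelMulZero M] {v : ℕ → M} (hv : IsCompletelyMultiplicative v)
    (hfin : {s | s.Prime ∧ v s ≠ 1}.Finite) {P : ℕ} (hP : P.Prime) (hP0 : v P ≠ 0)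
    (hP1 : v P ≠ 1) {k : ℕ} (hk0 : k ≠ 0) (hkP : ∀ i, k ≠ P ^ i) :
    ¬ IsAutomatic k fun n => v (n + 1) := by
  intro hauto
  obtain ⟨M, hM⟩ := hauto.not_injective_kernel
  obtain ⟨m, hPm, hgood⟩ := Nat.exists_coprime_forall_prime_not_dvd hP hfin
  have hm0 : m ≠ 0 := by rintro rfl; exact hP.ne_one (Nat.coprime_zero_right P |>.1 hPm)
  obtain ⟨κ, k', hPk', rfl⟩ := Nat.exists_eq_pow_mul_and_not_dvd hk0 P hP.ne_one
  have hk' : 1 < k' := by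
    have : k' ≠ 0 := by rintro rfl; simp at hk0
    have : k' ≠ 1 := by rintro rfl; exact hkP κ (mul_one _)
    omega
  set e := M * m + 1 with he
  let σ : Fin (M + 1) → ℕ := fun t => 1 + m * t
  have hσ0 : ∀ t, 0 < σ t := fun _ => Nat.add_pos_left Nat.one_pos _
  have hσk : ∀ t, σ t ≤ k' ^ e := fun t => by
    have : m * t ≤ M * m := by rw [mul_comm]; exact Nat.mul_le_mul_right m (Nat.lt_succ_iff.1 t.2)
    have : e < k' ^ e := Nat.lt_pow_self hk'
    simp only [σ]
    omega
  have hsplit : ∀ t n, (P ^ κ * k') ^ e * n + (P ^ (κ * e) * σ t - 1) + 1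
      = P ^ (κ * e) * (k' ^ e * n + σ t) := fun t n => by
    have : 0 < P ^ (κ * e) * σ t := Nat.mul_pos (pow_pos hP.pos _) (hσ0 t)
    rw [mul_pow, ← pow_mul, add_assoc, Nat.sub_add_cancel this]
    ring
  refine hM e (fun t => P ^ (κ * e) * σ t - 1) (fun t => ?_) fun a b hab => ?_
  · have : P ^ (κ * e) * σ t ≤ (P ^ κ * k') ^ e := by
      rw [mul_pow, ← pow_mul]; exact Nat.mul_le_mul_left _ (hσk t)
    have : 0 < P ^ (κ * e) * σ t := Nat.mul_pos (pow_pos hP.pos _) (hσ0 t)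
    omega
  have hσab : σ a = σ b := hv.eq_of_map_mul_add_eq hP hP0 hP1 hPm hgood
      (Nat.Coprime.pow_left e ((hP.coprime_iff_not_dvd.2 hPk').symm))
      ((Nat.coprime_add_mul_left_left 1 m a).2 (Nat.coprime_one_left m))
      ((Nat.coprime_add_mul_left_left 1 m b).2 (Nat.coprime_one_left m)) fun n => by
    have hab := congrFun hab (m * n)
    simp only [hsplit] at hab
    rwa [hv.map_mul _ _ (pow_pos hP.pos _) (Nat.add_pos_right _ (hσ0 a)),
      hv.map_mul _ _ (pow_pos hP.pos _) (Nat.add_pos_right _ (hσ0 b)),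
      mul_right_inj' (hv.map_pow hP.pos _ ▸ pow_ne_zero _ hP0)] at hab
  exact Fin.ext (Nat.eq_of_mul_eq_mul_left (Nat.pos_of_ne_zero hm0) (by simpa [σ] using hσab))

theorem stmt14 {K : Type*} [Field K] (u : ℕ → K) (h1 : u 1 = 1)
    (hmul : ∀ m n : ℕ, 0 < m → 0 < n → u (m * n) = u m * u n)
    (hfin0 : {p : ℕ | p.Prime ∧ u p = 0}.Finite)
    (d : ℕ)
    (hfin : {p : ℕ | p.Prime ∧ u p ^ d ≠ 0 ∧ u p ^ d ≠ 1}.Finite)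
    (hcard : 2 ≤ {p : ℕ | p.Prime ∧ u p ^ d ≠ 0 ∧ u p ^ d ≠ 1}.ncard)
    (k : ℕ) (hk : 2 ≤ k) :
    ¬ IsAutomatic k (fun n => u (n + 1)) := by
  intro hauto
  have hv : IsCompletelyMultiplicative fun n => u n ^ d :=
    IsCompletelyMultiplicative.pow ⟨h1, hmul⟩ d
  have hvfin : {s | s.Prime ∧ u s ^ d ≠ 1}.Finite := (hfin0.union hfin).subset fun s ⟨hs, hs1⟩ => by
    by_cases hs0 : u s = 0
    · exact Or.inl ⟨hs, hs0⟩
    · exact Or.inr ⟨hs, pow_ne_zero d hs0, hs1⟩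
  obtain ⟨p, q, ⟨hp, hp0, hp1⟩, ⟨hq, hq0, hq1⟩, hpq⟩ := (Set.one_lt_ncard_iff hfin).1 hcard
  have hvauto : IsAutomatic k fun n => u (n + 1) ^ d := hauto.comp (· ^ d)
  by_cases hkp : ∀ i, k ≠ p ^ i
  · exact hv.not_isAutomatic hvfin hp hp0 hp1 (by omega) hkp hvauto
  · refine hv.not_isAutomatic hvfin hq hq0 hq1 (by omega) (fun j hkq => hpq ?_) hvauto
    obtain ⟨i, rfl⟩ : ∃ i, k = p ^ i := by simpa using hkp
    have hi : i ≠ 0 := by rintro rfl; simp at hk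
    exact (Nat.prime_dvd_prime_iff_eq hp hq).1 (hp.dvd_of_dvd_pow (hkq ▸ dvd_pow_self p hi))
end

section
/- Let p be a prime, a an element of finite order in a group, q, b positive integers with p ∤ q, and T a positive integer with v_p(T) = k. Then there exist arbitrarily large integers m with v_p(q·m + b) = k + 1, and for such m one has v_p(q·(m + T) + b) = k. -/
theorem stmt18 {G : Type*} [Group G] (a : G) (hfin : IsOfFinOrder a)
    (p : ℕ) (hp : p.Prime) (q b : ℕ) (hq : 0 < q) (hb : 0 < b) (hpq : ¬ p ∣ q)
    (T : ℕ) (hT : 0 < T) (k : ℕ) (hk : padicValNat p T = k) :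
    ∀ M : ℕ, ∃ m ≥ M, padicValNat p (q * m + b) = k + 1 ∧
      padicValNat p (q * (m + T) + b) = k := by
  intro M
  have hp1 : 1 < p := hp.one_lt
  haveI : Fact p.Prime := ⟨hp⟩
  set P := p ^ (k + 2) with hP
  haveI : NeZero P := ⟨by positivity⟩
  have hqu : IsUnit (q : ZMod P) := by
    rw [ZMod.isUnit_iff_coprime]
    exact Nat.Coprime.pow_right _ ((hp.coprime_iff_not_dvd.mpr hpq).symm)
  set X : ZMod P := (p : ZMod P) ^ (k + 1) with hX
  set c : ℕ := (((q : ZMod P))⁻¹ * (X - (b : ZMod P))).val with hc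
  set m : ℕ := c + P * (M + 1) with hm
  have hmM : m ≥ M := by
    have : M ≤ P * (M + 1) := by nlinarith [Nat.one_le_iff_ne_zero.mpr (NeZero.ne P)]
    omega
  have hcast : ((q * m + b : ℕ) : ZMod P) = X := by
    push_cast [hm, hc]
    rw [ZMod.natCast_val, ZMod.cast_id, ZMod.natCast_self, zero_mul, add_zero,
      ← mul_assoc, ZMod.mul_inv_of_unit _ hqu, one_mul]
    ring
  have hmod : (q * m + b) ≡ p ^ (k + 1) [MOD P] := by
    rw [← ZMod.natCast_eq_natCast_iff]
    rw [hcast, hX]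
    push_cast
    ring
  have hdvd1 : p ^ (k + 1) ∣ q * m + b := by
    have h2 : (q * m + b) ≡ p ^ (k + 1) [MOD p ^ (k + 1)] :=
      hmod.of_dvd (pow_dvd_pow p (by omega))
    have := (Nat.modEq_zero_iff_dvd).mpr (dvd_refl (p ^ (k + 1)))
    exact (Nat.modEq_zero_iff_dvd).mp (h2.trans this)
  have hndvd : ¬ P ∣ q * m + b := by
    intro h
    have h2 : P ∣ p ^ (k + 1) := by
      have := (Nat.modEq_zero_iff_dvd.mpr h).symm.trans hmod
      exact Nat.modEq_zero_iff_dvd.mp this.symm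
    have := (Nat.pow_dvd_pow_iff_le_right hp1).mp h2
    omega
  have hne : q * m + b ≠ 0 := by positivity
  have hval1 : padicValNat p (q * m + b) = k + 1 := by
    have hle : k + 1 ≤ padicValNat p (q * m + b) :=
      (padicValNat_dvd_iff_le hne).mp hdvd1
    have hlt : padicValNat p (q * m + b) < k + 2 := by
      by_contra h
      exact hndvd ((padicValNat_dvd_iff_le hne).mpr (by omega))
    omega
  refine ⟨m, hmM, hval1, ?_⟩
  -- second part
  have hqT : padicValNat p (q * T) = k := by
    rw [padicValNat.mul (by omega) (by omega),
      padicValNat.eq_zero_of_not_dvd hpq, hk, zero_add]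
  have hqT0 : q * T ≠ 0 := by positivity
  have hdvdk : p ^ k ∣ q * T := by
    have := pow_padicValNat_dvd (p := p) (n := q * T)
    rwa [hqT] at this
  have hndvdk : ¬ p ^ (k + 1) ∣ q * T := by
    have := pow_succ_padicValNat_not_dvd (p := p) hqT0
    rwa [hqT] at this
  have heq : q * (m + T) + b = (q * m + b) + q * T := by ring
  rw [heq]
  have hs0 : (q * m + b) + q * T ≠ 0 := by positivity
  have hsd : p ^ k ∣ (q * m + b) + q * T :=
    dvd_add (dvd_trans (pow_dvd_pow p (by omega)) hdvd1) hdvdk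
  have hsnd : ¬ p ^ (k + 1) ∣ (q * m + b) + q * T := by
    intro h
    exact hndvdk ((Nat.dvd_add_right hdvd1).mp h)
  have hle : k ≤ padicValNat p ((q * m + b) + q * T) :=
    (padicValNat_dvd_iff_le hs0).mp hsd
  have hlt : padicValNat p ((q * m + b) + q * T) < k + 1 := by
    by_contra h
    exact hsnd ((padicValNat_dvd_iff_le hs0).mpr (by omega))
  omega
end
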